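/- arXiv:1711.06944 — 3 statements merged into one kernel-verified Lean document; each statement's English description precedes it below -/
import Mathlib

section
/- In dimension 2 with one actuated direction, suppose g_{11}(x), g_{12}(x) are smooth, g_{22} > 0 constant, D = g_{11}g_{22} − g_{12}² > 0, A_{11} = g_{11} − g_{12} g_{22}^{-1}(g_{12} + g_{22}τ) ≠ 0, and τ satisfies −g_{11}τ' + g_{12}² g_{22}^{-1} τ' + g_{12} τ τ' + (1/2) g_{11}' τ − τ g_{12} g_{22}^{-1} g_{12}' − g_{12} τ τ' = 0 (the equation (ODE-sol) with n = 2). Then the feedback control u = −g_{22}τ' ẋ² − g_{22}τ ẍ, evaluated along solutions with ẍ = A^{11}(−(1/2)g_{11}'ẋ² + g_{12}g_{22}^{-1}g_{12}'ẋ² + g_{12}τ'ẋ² − V'), reduces to u = g_{22} τ A^{11} V', which is independent of the velocities ẋ, θ̇. -/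
theorem stmt_6 (g11 g12 V τ : ℝ → ℝ) (g22 : ℝ) (hg22 : 0 < g22)
    (h11 : ContDiff ℝ (⊤ : ℕ∞) g11) (h12 : ContDiff ℝ (⊤ : ℕ∞) g12)
    (hV : ContDiff ℝ (⊤ : ℕ∞) V) (hτsm : ContDiff ℝ (⊤ : ℕ∞) τ)
    (hD : ∀ x, 0 < g11 x * g22 - g12 x ^ 2)
    (hODE : ∀ x, 2 * τ x * g12 x * g22⁻¹ * deriv g12 x + 2 * τ x * g12 x * deriv τ x
        - τ x * deriv g11 x + 2 * g11 x * deriv τ x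
        - 2 * g12 x ^ 2 * g22⁻¹ * deriv τ x - 2 * g12 x * τ x * deriv τ x = 0)
    (A11 : ℝ → ℝ)
    (hA11 : ∀ x, A11 x = g11 x - g12 x * g22⁻¹ * (g12 x + g22 * τ x))
    (hA0 : ∀ x, A11 x ≠ 0) :
    ∀ x xd : ℝ,
      -g22 * deriv τ x * xd ^ 2 - g22 * τ x *
          ((A11 x)⁻¹ * (-(1 / 2) * deriv g11 x * xd ^ 2
            + g12 x * g22⁻¹ * deriv g12 x * xd ^ 2 + g12 x * deriv τ x * xd ^ 2
            - deriv V x))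
        = g22 * τ x * (A11 x)⁻¹ * deriv V x := by
  intro x xd
  have hO := hODE x
  have h0 := hA0 x
  rw [hA11 x] at h0 ⊢
  set A := g11 x - g12 x * g22⁻¹ * (g12 x + g22 * τ x) with hAdef
  have key : deriv τ x * A =
      τ x * ((1/2) * deriv g11 x - g12 x * g22⁻¹ * deriv g12 x - g12 x * deriv τ x) := by
    rw [hAdef]
    linear_combination hO / 2 - (deriv τ x * g12 x * τ x) * (mul_inv_cancel₀ (ne_of_gt hg22))
  have hcancel : A⁻¹ * A = 1 := inv_mul_cancel₀ h0
  linear_combination (-(g22) * A⁻¹ * xd ^ 2) * key + (g22 * deriv τ x * xd ^ 2) * hcancel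
end

section
/- In dimension 2 with one actuated direction, the simplified-matching choice τ(x) = −(β/(γσ)) cos(x − ψ) satisfies the factored Helmholtz equation (β cos(ψ−x) + γστ)·(−β² sin(2(ψ−x))τ + (β² − 2αγ + β²cos(2(ψ−x)))τ') = 0, as does τ(x) = k√(αγ − β²cos²(x−ψ)) for any constant k; and conversely any smooth τ on an interval where β cos(ψ−x) + γστ ≠ 0 satisfying this equation is of the second form. -/
theorem stmt_12 (α β γ σ ψ : ℝ) (hγ : γ ≠ 0) (hσ : σ ≠ 0) (h : β ^ 2 < α * γ) :
    -- the simplified-matching choice solves the factored Helmholtz equation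
    (∀ τ : ℝ → ℝ, (∀ x, τ x = -(β / (γ * σ)) * Real.cos (x - ψ)) →
      ∀ x, (β * Real.cos (ψ - x) + γ * σ * τ x) *
          (-(β ^ 2) * Real.sin (2 * (ψ - x)) * τ x
            + (β ^ 2 - 2 * α * γ + β ^ 2 * Real.cos (2 * (ψ - x))) * deriv τ x) = 0)
    ∧
    -- so does the new family of solutions
    (∀ (k : ℝ) (τ : ℝ → ℝ),
      (∀ x, τ x = k * Real.sqrt (α * γ - β ^ 2 * Real.cos (x - ψ) ^ 2)) →
      ∀ x, (β * Real.cos (ψ - x) + γ * σ * τ x) *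
          (-(β ^ 2) * Real.sin (2 * (ψ - x)) * τ x
            + (β ^ 2 - 2 * α * γ + β ^ 2 * Real.cos (2 * (ψ - x))) * deriv τ x) = 0)
    ∧
    -- and conversely, where the first factor does not vanish, every smooth solution
    -- is of the second form
    (∀ (a b : ℝ) (τ : ℝ → ℝ), ContDiffOn ℝ (⊤ : ℕ∞) τ (Set.Ioo a b) →
      (∀ x ∈ Set.Ioo a b, β * Real.cos (ψ - x) + γ * σ * τ x ≠ 0) →
      (∀ x ∈ Set.Ioo a b, (β * Real.cos (ψ - x) + γ * σ * τ x) *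
          (-(β ^ 2) * Real.sin (2 * (ψ - x)) * τ x
            + (β ^ 2 - 2 * α * γ + β ^ 2 * Real.cos (2 * (ψ - x))) * deriv τ x) = 0) →
      ∃ k : ℝ, ∀ x ∈ Set.Ioo a b,
        τ x = k * Real.sqrt (α * γ - β ^ 2 * Real.cos (x - ψ) ^ 2)) := by
  -- positivity of S x = αγ - β² cos²(x-ψ)
  have hS : ∀ x : ℝ, 0 < α * γ - β ^ 2 * Real.cos (x - ψ) ^ 2 := by
    intro x
    nlinarith [Real.cos_sq_le_one (x - ψ), Real.neg_one_le_cos (x - ψ), sq_nonneg β,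
      sq_nonneg (Real.cos (x - ψ))]
  have hsqpos : ∀ x : ℝ, 0 < Real.sqrt (α * γ - β ^ 2 * Real.cos (x - ψ) ^ 2) :=
    fun x => Real.sqrt_pos.mpr (hS x)
  -- derivative of cos (x - ψ)
  have hc : ∀ x : ℝ, HasDerivAt (fun x => Real.cos (x - ψ)) (-Real.sin (x - ψ)) x := by
    intro x
    simpa [Function.comp_def] using (Real.hasDerivAt_cos (x - ψ)).comp x ((hasDerivAt_id x).sub_const ψ)
  -- derivative of S
  have hSd : ∀ x : ℝ, HasDerivAt (fun x => α * γ - β ^ 2 * Real.cos (x - ψ) ^ 2)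
      (2 * β ^ 2 * Real.cos (x - ψ) * Real.sin (x - ψ)) x := by
    intro x
    have h1 : HasDerivAt (fun x => Real.cos (x - ψ) ^ 2)
        ((2 : ℕ) * Real.cos (x - ψ) ^ 1 * (-Real.sin (x - ψ))) x := (hc x).pow 2
    have h2 := ((h1.const_mul (β ^ 2)).const_sub (α * γ))
    refine h2.congr_deriv ?_; push_cast; ring
  -- derivative of √S
  have hsqd : ∀ x : ℝ, HasDerivAt (fun x => Real.sqrt (α * γ - β ^ 2 * Real.cos (x - ψ) ^ 2))
      (β ^ 2 * Real.cos (x - ψ) * Real.sin (x - ψ) /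
        Real.sqrt (α * γ - β ^ 2 * Real.cos (x - ψ) ^ 2)) x := by
    intro x
    have := (Real.hasDerivAt_sqrt (ne_of_gt (hS x))).comp x (hSd x)
    refine this.congr_deriv ?_
    field_simp
  refine ⟨?_, ?_, ?_⟩
  · intro τ hτ x
    have : β * Real.cos (ψ - x) + γ * σ * τ x = 0 := by
      rw [hτ x, show ψ - x = -(x - ψ) by ring, Real.cos_neg]
      field_simp
      ring
    rw [this, zero_mul]
  · intro k τ hτ x
    have hτ' : deriv τ x = k * (β ^ 2 * Real.cos (x - ψ) * Real.sin (x - ψ) /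
        Real.sqrt (α * γ - β ^ 2 * Real.cos (x - ψ) ^ 2)) := by
      have hd : HasDerivAt τ (k * (β ^ 2 * Real.cos (x - ψ) * Real.sin (x - ψ) /
          Real.sqrt (α * γ - β ^ 2 * Real.cos (x - ψ) ^ 2))) x := by
        have := (hsqd x).const_mul k
        exact this.congr_of_eventuallyEq (Filter.Eventually.of_forall fun y => (hτ y))
      exact hd.deriv
    have hzero : -(β ^ 2) * Real.sin (2 * (ψ - x)) * τ x
        + (β ^ 2 - 2 * α * γ + β ^ 2 * Real.cos (2 * (ψ - x))) * deriv τ x = 0 := by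
      rw [hτ x, hτ']
      have hs2 : Real.sqrt (α * γ - β ^ 2 * Real.cos (x - ψ) ^ 2) ^ 2
          = α * γ - β ^ 2 * Real.cos (x - ψ) ^ 2 := Real.sq_sqrt (le_of_lt (hS x))
      have hsne := (hsqpos x).ne'
      have hsin : Real.sin (2 * (ψ - x)) = -(2 * Real.sin (x - ψ) * Real.cos (x - ψ)) := by
        rw [show (2 : ℝ) * (ψ - x) = -(2 * (x - ψ)) by ring, Real.sin_neg, Real.sin_two_mul]
      have hcos : Real.cos (2 * (ψ - x)) = 2 * Real.cos (x - ψ) ^ 2 - 1 := by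
        rw [show (2 : ℝ) * (ψ - x) = -(2 * (x - ψ)) by ring, Real.cos_neg, Real.cos_two_mul]
      rw [hsin, hcos]
      field_simp
      linear_combination (2 * k * β ^ 2 * Real.sin (x - ψ) * Real.cos (x - ψ)) * hs2
    rw [hzero, mul_zero]
  · intro a b τ hsm hne heq
    by_cases hab : a < b
    · set S : ℝ → ℝ := fun x => α * γ - β ^ 2 * Real.cos (x - ψ) ^ 2 with hSdef
      set g : ℝ → ℝ := fun x => τ x / Real.sqrt (S x) with hgdef
      have hgd : ∀ x ∈ Set.Ioo a b, HasDerivAt g 0 x := by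
        intro x hx
        have hτdiff : DifferentiableAt ℝ τ x :=
          ((hsm.differentiableOn (by norm_num)).differentiableAt
            (isOpen_Ioo.mem_nhds hx))
        have hτd : HasDerivAt τ (deriv τ x) x := hτdiff.hasDerivAt
        -- the ODE at x
        have hfac : -(β ^ 2) * Real.sin (2 * (ψ - x)) * τ x
            + (β ^ 2 - 2 * α * γ + β ^ 2 * Real.cos (2 * (ψ - x))) * deriv τ x = 0 := by
          rcases mul_eq_zero.mp (heq x hx) with h1 | h2
          · exact absurd h1 (hne x hx)
          · exact h2
        have hsin : Real.sin (2 * (ψ - x)) = -(2 * Real.sin (x - ψ) * Real.cos (x - ψ)) := by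
          rw [show (2 : ℝ) * (ψ - x) = -(2 * (x - ψ)) by ring, Real.sin_neg, Real.sin_two_mul]
        have hcos : Real.cos (2 * (ψ - x)) = 2 * Real.cos (x - ψ) ^ 2 - 1 := by
          rw [show (2 : ℝ) * (ψ - x) = -(2 * (x - ψ)) by ring, Real.cos_neg, Real.cos_two_mul]
        rw [hsin, hcos] at hfac
        -- 2 * S x * deriv τ x = 2 β² cos sin τ
        have hkey : 2 * S x * deriv τ x
            = 2 * β ^ 2 * Real.cos (x - ψ) * Real.sin (x - ψ) * τ x := by
          simp only [hSdef]; nlinarith [hfac]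
        have hd := hτd.div (hsqd x) (hsqpos x).ne'
        have hs2 : Real.sqrt (S x) ^ 2 = S x := Real.sq_sqrt (le_of_lt (hS x))
        have : (deriv τ x * Real.sqrt (S x) -
            τ x * (β ^ 2 * Real.cos (x - ψ) * Real.sin (x - ψ) / Real.sqrt (S x))) /
            Real.sqrt (S x) ^ 2 = 0 := by
          rw [div_eq_zero_iff]
          left
          have hsne : Real.sqrt (S x) ≠ 0 := (hsqpos x).ne'
          field_simp
          linear_combination (deriv τ x) * hs2 + (1 / 2 : ℝ) * hkey
        rw [← this]
        exact hd
      have hconst : ∀ x ∈ Set.Ioo a b, ∀ y ∈ Set.Ioo a b, g x = g y := by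
        intro x hx y hy
        have hcvx : Convex ℝ (Set.Ioo a b) := convex_Ioo a b
        refine hcvx.is_const_of_fderivWithin_eq_zero
          (fun z hz => ((hgd z hz).differentiableAt.differentiableWithinAt)) ?_ hx hy
        intro z hz
        have : fderivWithin ℝ g (Set.Ioo a b) z = fderiv ℝ g z :=
          fderivWithin_of_isOpen isOpen_Ioo hz
        rw [this, (hgd z hz).hasFDerivAt.fderiv]
        ext
        simp
      set x₀ := (a + b) / 2 with hx₀
      have hx₀mem : x₀ ∈ Set.Ioo a b := ⟨by linarith, by linarith⟩
      refine ⟨g x₀, fun x hx => ?_⟩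
      have hthis := hconst x hx x₀ hx₀mem
      have hsne := (hsqpos x).ne'
      simp only [hgdef, hSdef] at hthis
      rw [div_eq_iff hsne] at hthis
      rw [hthis]
    · exact ⟨0, fun x hx => absurd (lt_trans hx.1 hx.2) hab⟩
end

section
/- Under M2 (σ^{bd}(σ_{ad,α} + g_{ad,α}) = 2g^{bd}g_{ad,α}), the expression E_{αβ} = (g_{de,α} + σ_{de,α})τ^d_γ τ^e_β − σ_{ah}τ^h_β g^{ea}g_{fe,α}τ^f_γ − σ_{de}τ^d_γ g^{fe}g_{hf,α}τ^h_β vanishes identically, for any matrix τ^a_α. -/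
/-!
Write `S = Dg + Dσ` and `N = σ g⁻¹ Dgᵀ`. Multiplying M2 by `σ` gives `S = 2 N`, and since `S` is
symmetric so is `N`, hence `S = N + Nᵀ`. With `g⁻¹` and `σ` symmetric, the second and third terms
of the expression are the bilinear forms of `Nᵀ` and `N` evaluated at `(u, v)`, and they add up to
the first one, the bilinear form of `S`.
-/

open Matrix

namespace Matrix

variable {n R : Type*} [Fintype n]

section CommSemiring

variable [CommSemiring R]

theorem sum_sum_mul_mul_eq_dotProduct_mulVec (M : Matrix n n R) (u v : n → R) :
    ∑ d, ∑ e, M d e * u d * v e = u ⬝ᵥ M *ᵥ v := by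
  simp only [dotProduct, mulVec, Finset.mul_sum]
  exact Fintype.sum_congr _ _ fun d => Fintype.sum_congr _ _ fun e => by ring

theorem sum_sum_sum_sum_eq_dotProduct_mul_mul_mulVec (A B C : Matrix n n R) (u v : n → R) :
    ∑ a, ∑ h, ∑ e, ∑ f, C a h * v h * B e a * A f e * u f = u ⬝ᵥ (A * B * C) *ᵥ v := by
  simp only [dotProduct, mulVec, mul_apply, Finset.mul_sum, Finset.sum_mul]
  conv_lhs => enter [2, a, 2, h]; rw [Finset.sum_comm]
  conv_lhs => enter [2, a]; rw [Finset.sum_comm]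
  rw [Finset.sum_comm]
  refine Fintype.sum_congr _ _ fun f => ?_
  rw [Finset.sum_comm]
  exact Fintype.sum_congr _ _ fun h => Fintype.sum_congr _ _ fun a =>
    Fintype.sum_congr _ _ fun e => by ring

theorem sum_sum_sum_sum_eq_dotProduct_mul_transpose_mulVec (A B C : Matrix n n R)
    (u v : n → R) :
    ∑ d, ∑ e, ∑ f, ∑ h, A d e * u d * B f e * C h f * v h = u ⬝ᵥ (A * Bᵀ * Cᵀ) *ᵥ v := by
  simp only [dotProduct, mulVec, mul_apply, transpose_apply, Finset.mul_sum, Finset.sum_mul]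
  refine Fintype.sum_congr _ _ fun d => ?_
  conv_lhs => enter [2, e]; rw [Finset.sum_comm]
  rw [Finset.sum_comm]
  refine Fintype.sum_congr _ _ fun h => ?_
  rw [Finset.sum_comm]
  exact Fintype.sum_congr _ _ fun f => Fintype.sum_congr _ _ fun e => by ring

end CommSemiring

theorem IsSymm.of_mul_eq_one [DecidableEq n] [CommRing R] {A B : Matrix n n R}
    (hA : A.IsSymm) (h : B * A = 1) : B.IsSymm := by
  rw [← inv_eq_left_inv h]
  exact (transpose_nonsing_inv A).trans (congrArg Inv.inv hA.eq)

theorem IsSymm.eq_transpose_add_of_eq_two_smul {K : Type*} [Field K] [NeZero (2 : K)]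
    {S N : Matrix n n K} (hS : S.IsSymm) (h : S = (2 : K) • N) : S = Nᵀ + N := by
  have hN : Nᵀ = N := by
    apply smul_right_injective _ (two_ne_zero : (2 : K) ≠ 0)
    simp only [← transpose_smul, ← h, hS.eq]
  rw [hN, h, two_smul]

end Matrix

theorem stmt_18_general (p : ℕ) (g σ ginv σinv Dg Dσ : Matrix (Fin p) (Fin p) ℝ)
    (hgs : g.IsSymm) (hσs : σ.IsSymm) (hDgs : Dg.IsSymm) (hDσs : Dσ.IsSymm)
    (hg' : ginv * g = 1)
    (hσ : σ * σinv = 1)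
    (hM2 : ∀ a b, ∑ d, σinv b d * (Dσ a d + Dg a d) = 2 * ∑ d, ginv b d * Dg a d) :
    ∀ u v : Fin p → ℝ,
      (∑ d, ∑ e, (Dg d e + Dσ d e) * u d * v e)
        - (∑ a, ∑ h, ∑ e, ∑ f, σ a h * v h * ginv e a * Dg f e * u f)
        - (∑ d, ∑ e, ∑ f, ∑ h, σ d e * u d * ginv f e * Dg h f * v h) = 0 := by
  intro u v
  have hginv : ginv.IsSymm := hgs.of_mul_eq_one hg'
  have hS : (Dg + Dσ).IsSymm := hDgs.add hDσs
  have hM2' : σinv * (Dg + Dσ)ᵀ = (2 : ℝ) • (ginv * Dgᵀ) := by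
    ext b a
    simpa [mul_apply, add_comm] using hM2 a b
  have hS2 : Dg + Dσ = (2 : ℝ) • (σ * ginv * Dgᵀ) := by
    rw [← hS.eq, ← Matrix.one_mul (Dg + Dσ)ᵀ, ← hσ, Matrix.mul_assoc, hM2', Matrix.mul_smul,
      Matrix.mul_assoc]
  have hNt : (σ * ginv * Dgᵀ)ᵀ = Dg * ginv * σ := by
    rw [transpose_mul, transpose_mul, transpose_transpose, hginv.eq, hσs.eq, Matrix.mul_assoc]
  have hS_form : ∑ d, ∑ e, (Dg d e + Dσ d e) * u d * v e = u ⬝ᵥ (Dg + Dσ) *ᵥ v :=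
    sum_sum_mul_mul_eq_dotProduct_mulVec _ u v
  rw [hS_form, sum_sum_sum_sum_eq_dotProduct_mul_mul_mulVec,
    sum_sum_sum_sum_eq_dotProduct_mul_transpose_mulVec, hginv.eq,
    hS.eq_transpose_add_of_eq_two_smul hS2, hNt, add_mulVec, dotProduct_add]
  ring

theorem stmt_18 (p : ℕ) (g σ ginv σinv Dg Dσ : Matrix (Fin p) (Fin p) ℝ)
    (hgs : g.IsSymm) (hσs : σ.IsSymm) (hDgs : Dg.IsSymm) (hDσs : Dσ.IsSymm)
    (hg : g * ginv = 1) (hg' : ginv * g = 1)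
    (hσ : σ * σinv = 1) (hσ' : σinv * σ = 1)
    (hM2 : ∀ a b, ∑ d, σinv b d * (Dσ a d + Dg a d) = 2 * ∑ d, ginv b d * Dg a d) :
    ∀ u v : Fin p → ℝ,
      (∑ d, ∑ e, (Dg d e + Dσ d e) * u d * v e)
        - (∑ a, ∑ h, ∑ e, ∑ f, σ a h * v h * ginv e a * Dg f e * u f)
        - (∑ d, ∑ e, ∑ f, ∑ h, σ d e * u d * ginv f e * Dg h f * v h) = 0 :=
  stmt_18_general p g σ ginv σinv Dg Dσ hgs hσs hDgs hDσs hg' hσ hM2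
end
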